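/- Let ρ ∈ (0,1), let π be a bounded probability density on [0,1], and let b : [0,1]² → ℝ be bounded and measurable. Define the iteration map Φ(g)(x,y) = ρ·π(y)·∫*_{u=x}^{y} [g(x,u) + g(y,u)] du + b(x,y), let g₀ : [0,1]² → ℝ be bounded measurable, and set g_{n+1} = Φ(g_n). Then for every n ≥ 2 and all x, y ∈ [0,1]: |g_{n+1}(x,y) − g_n(x,y)| ≤ 4·ρⁿ·π(y)·‖g₁ − g₀‖_∞·∫*_{u=x}^{y} π(u) du, where ‖·‖_∞ denotes the supremum over [0,1]². In particular, the sequence (g_n) converges pointwise on [0,1]². -/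

import Mathlib

/-!
Write `d n = g (n + 1) - g n` and `C a b = ∫*_{u=a}^{b} π(u) du`. Linearity of the circular
integral gives `d (n + 1) x y = ρ π(y) ∫*_{u=x}^{y} (d n x u + d n y u) du`. Two such steps turn
`|d 0| ≤ M` into `|d 2 x y| ≤ 4 ρ² M π(y) C x y`, and this shape reproduces itself with an extra
factor `ρ` thanks to the identity `∫*_{u=x}^{y} π(u) (C x u + C y u) du = C x y`. For the latter,
with `P` the primitive of `π`, one has `C a u = P u - P a + [u < a]` since `π` has mass one, and
the identity reduces to `∫_a^b π (2P + k) = (P b - P a) (P a + P b + k)`, an integration by parts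
for the absolutely continuous `P`. The increments being geometrically small, `g n x y` converges.
-/

open MeasureTheory

/-- Circular integral: `∫*_{u=a}^{b} h(u) du` on the circle `[0,1)`.
It equals `∫_a^b h` if `a ≤ b` and `∫_a^1 h + ∫_0^b h` if `a > b`. -/
noncomputable def cint (a b : ℝ) (h : ℝ → ℝ) : ℝ :=
  if a ≤ b then ∫ u in a..b, h u
  else (∫ u in a..(1 : ℝ), h u) + ∫ u in (0 : ℝ)..b, h u

open Set Filter intervalIntegral

lemma MeasureTheory.IntegrableOn.intervalIntegrable_of_mem_Icc {f : ℝ → ℝ} {a b c d : ℝ}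
    (hf : IntegrableOn f (Icc c d)) (ha : a ∈ Icc c d) (hb : b ∈ Icc c d) :
    IntervalIntegrable f volume a b :=
  (hf.mono_set (uIcc_subset_Icc ha hb)).intervalIntegrable

lemma integral_mul_two_mul_primitive_add {f : ℝ → ℝ} {a b c d : ℝ}
    (hf : IntervalIntegrable f volume c d) (ha : a ∈ uIcc c d) (hb : b ∈ uIcc c d) (k : ℝ) :
    ∫ u in a..b, f u * (2 * (∫ v in c..u, f v) + k) =
      (∫ v in a..b, f v) * ((∫ v in c..a, f v) + (∫ v in c..b, f v) + k) := by
  set Q : ℝ → ℝ := fun u => (∫ v in c..u, f v) + k / 2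
  have hsub : uIcc a b ⊆ uIcc c d := uIcc_subset_uIcc ha hb
  have hQ : AbsolutelyContinuousOnInterval Q a b := by
    have hk : AbsolutelyContinuousOnInterval (fun _ => k / 2) c d := by
      simpa [AbsolutelyContinuousOnInterval] using tendsto_const_nhds
    exact ((hf.absolutelyContinuousOnInterval_intervalIntegral left_mem_uIcc).add hk).mono hsub
  have hderiv : ∀ᵐ u, u ∈ uIoc a b → deriv Q u * Q u + Q u * deriv Q u =
      f u * (2 * (∫ v in c..u, f v) + k) := by
    filter_upwards [hf.ae_hasDerivAt_integral] with u hu hab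
    rw [((hu (hsub (uIoc_subset_uIcc hab)) c left_mem_uIcc).add_const (k / 2)).deriv]
    simp only [Q]; ring
  rw [← integral_congr_ae hderiv, hQ.integral_deriv_mul_eq_sub hQ,
    ← integral_interval_sub_left (hf.mono_set (uIcc_subset_uIcc left_mem_uIcc hb))
      (hf.mono_set (uIcc_subset_uIcc left_mem_uIcc ha))]
  ring

section CircularIntegral

variable {a b : ℝ} {h h₁ h₂ φ : ℝ → ℝ}

lemma cint_of_le (hab : a ≤ b) (h : ℝ → ℝ) : cint a b h = ∫ u in a..b, h u := if_pos hab

lemma cint_of_lt (hba : b < a) (h : ℝ → ℝ) :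
    cint a b h = (∫ u in a..1, h u) + ∫ u in 0..b, h u := if_neg hba.not_ge

lemma cint_eq_intervalIntegral_add (hh : IntegrableOn h (Icc 0 1)) (ha : a ∈ Icc (0 : ℝ) 1)
    (hb : b ∈ Icc (0 : ℝ) 1) :
    cint a b h = (∫ u in a..b, h u) + if b < a then ∫ u in 0..1, h u else 0 := by
  rcases le_or_gt a b with hab | hba
  · rw [cint_of_le hab, if_neg hab.not_gt, add_zero]
  · have h0a := integral_add_adjacent_intervals
      (hh.intervalIntegrable_of_mem_Icc unitInterval.zero_mem ha)
      (hh.intervalIntegrable_of_mem_Icc ha unitInterval.one_mem)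
    have h0b := integral_add_adjacent_intervals
      (hh.intervalIntegrable_of_mem_Icc unitInterval.zero_mem hb)
      (hh.intervalIntegrable_of_mem_Icc hb ha)
    rw [cint_of_lt hba, if_pos hba, integral_symm b a]
    linarith

lemma cint_const_mul (a b c : ℝ) (h : ℝ → ℝ) :
    cint a b (fun u => c * h u) = c * cint a b h := by
  unfold cint
  split_ifs <;> simp only [intervalIntegral.integral_const_mul, mul_add]

lemma cint_sub (hh₁ : IntegrableOn h₁ (Icc 0 1)) (hh₂ : IntegrableOn h₂ (Icc 0 1))
    (ha : a ∈ Icc (0 : ℝ) 1) (hb : b ∈ Icc (0 : ℝ) 1) :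
    cint a b (fun u => h₁ u - h₂ u) = cint a b h₁ - cint a b h₂ := by
  have hsub : IntegrableOn (fun u => h₁ u - h₂ u) (Icc 0 1) := hh₁.sub hh₂
  rw [cint_eq_intervalIntegral_add hsub ha hb, cint_eq_intervalIntegral_add hh₁ ha hb,
    cint_eq_intervalIntegral_add hh₂ ha hb,
    integral_sub (hh₁.intervalIntegrable_of_mem_Icc ha hb)
      (hh₂.intervalIntegrable_of_mem_Icc ha hb)]
  split_ifs
  · rw [integral_sub (hh₁.intervalIntegrable_of_mem_Icc unitInterval.zero_mem unitInterval.one_mem)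
      (hh₂.intervalIntegrable_of_mem_Icc unitInterval.zero_mem unitInterval.one_mem)]
    ring
  · ring

lemma cint_mono (hh₁ : IntegrableOn h₁ (Icc 0 1)) (hh₂ : IntegrableOn h₂ (Icc 0 1))
    (hle : ∀ u ∈ Icc (0 : ℝ) 1, h₁ u ≤ h₂ u) (ha : a ∈ Icc (0 : ℝ) 1) (hb : b ∈ Icc (0 : ℝ) 1) :
    cint a b h₁ ≤ cint a b h₂ := by
  have mono : ∀ c ∈ Icc (0 : ℝ) 1, ∀ d ∈ Icc (0 : ℝ) 1, c ≤ d →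
      ∫ u in c..d, h₁ u ≤ ∫ u in c..d, h₂ u := fun c hc d hd hcd =>
    integral_mono_on hcd (hh₁.intervalIntegrable_of_mem_Icc hc hd)
      (hh₂.intervalIntegrable_of_mem_Icc hc hd)
      fun u hu => hle u ⟨hc.1.trans hu.1, hu.2.trans hd.2⟩
  rcases le_or_gt a b with hab | hba
  · simpa only [cint_of_le hab] using mono a ha b hb hab
  · simpa only [cint_of_lt hba] using add_le_add (mono a ha 1 unitInterval.one_mem ha.2)
      (mono 0 unitInterval.zero_mem b hb hb.1)

lemma abs_cint_le (hh : IntegrableOn h (Icc 0 1)) (hφ : IntegrableOn φ (Icc 0 1))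
    (hle : ∀ u ∈ Icc (0 : ℝ) 1, |h u| ≤ φ u) (ha : a ∈ Icc (0 : ℝ) 1) (hb : b ∈ Icc (0 : ℝ) 1) :
    |cint a b h| ≤ cint a b φ := by
  have hneg : cint a b (fun u => -φ u) = -cint a b φ := by
    simpa only [neg_one_mul] using cint_const_mul a b (-1) φ
  refine abs_le.2 ⟨?_, cint_mono hh hφ (fun u hu => (le_abs_self _).trans (hle u hu)) ha hb⟩
  rw [← hneg]
  exact cint_mono hφ.neg hh (fun u hu => neg_le.1 ((neg_le_abs (h u)).trans (hle u hu))) ha hb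

lemma cint_le_integral (hh : IntegrableOn h (Icc 0 1)) (hnn : ∀ u ∈ Icc (0 : ℝ) 1, 0 ≤ h u)
    (ha : a ∈ Icc (0 : ℝ) 1) (hb : b ∈ Icc (0 : ℝ) 1) :
    cint a b h ≤ ∫ u in 0..1, h u := by
  rw [cint_eq_intervalIntegral_add hh ha hb]
  split_ifs with hba
  · rw [integral_symm]
    have := integral_nonneg (μ := volume) hba.le fun u hu =>
      hnn u ⟨hb.1.trans hu.1, hu.2.trans ha.2⟩
    linarith
  · rw [add_zero]
    exact integral_mono_interval ha.1 (not_lt.1 hba) hb.2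
      ((ae_restrict_iff' measurableSet_Ioc).2 (.of_forall fun u hu => hnn u ⟨hu.1.le, hu.2⟩))
      (hh.intervalIntegrable_of_mem_Icc unitInterval.zero_mem unitInterval.one_mem)

lemma abs_cint_le_of_abs_le (hh : IntegrableOn h (Icc 0 1)) {K : ℝ}
    (hK : ∀ u ∈ Icc (0 : ℝ) 1, |h u| ≤ K) (ha : a ∈ Icc (0 : ℝ) 1) (hb : b ∈ Icc (0 : ℝ) 1) :
    |cint a b h| ≤ K := by
  have hK0 : 0 ≤ K := (abs_nonneg _).trans (hK a ha)
  have hconst : IntegrableOn (fun _ => K) (Icc (0 : ℝ) 1) :=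
    integrableOn_const measure_Icc_lt_top.ne
  calc |cint a b h| ≤ cint a b (fun _ => K) := abs_cint_le hh hconst hK ha hb
    _ ≤ ∫ _ in (0 : ℝ)..1, K := cint_le_integral hconst (fun _ _ => hK0) ha hb
    _ = K := by simp

end CircularIntegral

lemma cint_eq_sub_add_ite {π : ℝ → ℝ} (hπ : IntegrableOn π (Icc 0 1))
    (hπ1 : ∫ u in (0 : ℝ)..1, π u = 1) {a u : ℝ} (ha : a ∈ Icc (0 : ℝ) 1)
    (hu : u ∈ Icc (0 : ℝ) 1) :
    cint a u π = (∫ v in 0..u, π v) - (∫ v in 0..a, π v) + if u < a then 1 else 0 := by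
  rw [cint_eq_intervalIntegral_add hπ ha hu, hπ1, ← integral_interval_sub_left
    (hπ.intervalIntegrable_of_mem_Icc unitInterval.zero_mem hu)
    (hπ.intervalIntegrable_of_mem_Icc unitInterval.zero_mem ha)]

lemma cint_mul_cint_add_cint {π : ℝ → ℝ} (hπ : IntegrableOn π (Icc 0 1))
    (hπ1 : ∫ u in (0 : ℝ)..1, π u = 1) {x y : ℝ} (hx : x ∈ Icc (0 : ℝ) 1)
    (hy : y ∈ Icc (0 : ℝ) 1) :
    cint x y (fun u => π u * (cint x u π + cint y u π)) = cint x y π := by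
  have hπ01 := hπ.intervalIntegrable_of_mem_Icc unitInterval.zero_mem unitInterval.one_mem
  have hmul : ∀ a ∈ Icc (0 : ℝ) 1, ∀ b ∈ Icc (0 : ℝ) 1, ∀ k : ℝ,
      ∫ u in a..b, π u * (2 * (∫ v in 0..u, π v) + k) =
        (∫ v in a..b, π v) * ((∫ v in 0..a, π v) + (∫ v in 0..b, π v) + k) :=
    fun a ha b hb k => integral_mul_two_mul_primitive_add hπ01
      (by rwa [uIcc_of_le zero_le_one]) (by rwa [uIcc_of_le zero_le_one]) k
  rcases le_or_gt x y with hxy | hyx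
  · have hcongr : ∫ u in x..y, π u * (cint x u π + cint y u π) =
        ∫ u in x..y, π u *
          (2 * (∫ v in 0..u, π v) + (1 - (∫ v in 0..x, π v) - ∫ v in 0..y, π v)) := by
      refine integral_congr_ae ?_
      filter_upwards [Measure.ae_ne volume y] with u hne hu
      rw [uIoc_of_le hxy] at hu
      have hu01 : u ∈ Icc (0 : ℝ) 1 := ⟨hx.1.trans hu.1.le, hu.2.trans hy.2⟩
      rw [cint_eq_sub_add_ite hπ hπ1 hx hu01, cint_eq_sub_add_ite hπ hπ1 hy hu01,
        if_neg hu.1.le.not_gt,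
        if_pos (hu.2.lt_of_ne hne)]
      ring
    rw [cint_of_le hxy, cint_of_le hxy, hcongr, hmul x hx y hy]
    ring
  · have hcongr₁ : ∫ u in x..1, π u * (cint x u π + cint y u π) =
        ∫ u in x..1, π u *
          (2 * (∫ v in 0..u, π v) + (-(∫ v in 0..x, π v) - ∫ v in 0..y, π v)) := by
      refine integral_congr fun u hu => ?_
      rw [uIcc_of_le hx.2] at hu
      have hu01 : u ∈ Icc (0 : ℝ) 1 := ⟨hx.1.trans hu.1, hu.2⟩
      rw [cint_eq_sub_add_ite hπ hπ1 hx hu01, cint_eq_sub_add_ite hπ hπ1 hy hu01,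
        if_neg hu.1.not_gt,
        if_neg (hyx.trans_le hu.1).not_gt]
      ring
    have hcongr₂ : ∫ u in 0..y, π u * (cint x u π + cint y u π) =
        ∫ u in 0..y, π u *
          (2 * (∫ v in 0..u, π v) + (2 - (∫ v in 0..x, π v) - ∫ v in 0..y, π v)) := by
      refine integral_congr_ae ?_
      filter_upwards [Measure.ae_ne volume y] with u hne hu
      rw [uIoc_of_le hy.1] at hu
      have hu01 : u ∈ Icc (0 : ℝ) 1 := ⟨hu.1.le, hu.2.trans hy.2⟩
      have huy : u < y := hu.2.lt_of_ne hne
      rw [cint_eq_sub_add_ite hπ hπ1 hx hu01, cint_eq_sub_add_ite hπ hπ1 hy hu01,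
        if_pos (huy.trans hyx), if_pos huy]
      ring
    rw [cint_of_lt hyx, cint_of_lt hyx, hcongr₁, hcongr₂, hmul x hx 1 unitInterval.one_mem,
      hmul 0 unitInterval.zero_mem y hy, ← integral_interval_sub_left hπ01
        (hπ.intervalIntegrable_of_mem_Icc unitInterval.zero_mem hx), hπ1, integral_same]
    ring

lemma integrableOn_Icc_of_abs_le {h : ℝ → ℝ} {a b K : ℝ} (hh : Measurable h)
    (hK : ∀ u ∈ Icc a b, |h u| ≤ K) : IntegrableOn h (Icc a b) :=
  Measure.integrableOn_of_bounded measure_Icc_lt_top.ne hh.aestronglyMeasurable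
    ((ae_restrict_iff' measurableSet_Icc).2 (.of_forall hK))

lemma measurable_setIntegral_Ioc {α : Type*} [MeasurableSpace α] {H : α → ℝ → ℝ}
    (hH : Measurable (Function.uncurry H)) {e₁ e₂ : α → ℝ} (he₁ : Measurable e₁)
    (he₂ : Measurable e₂) :
    Measurable fun p => ∫ v in Ioc (e₁ p) (e₂ p), H p v := by
  have hS : MeasurableSet {q : α × ℝ | q.2 ∈ Ioc (e₁ q.1) (e₂ q.1)} :=
    (measurableSet_lt (he₁.comp measurable_fst) measurable_snd).inter
      (measurableSet_le measurable_snd (he₂.comp measurable_fst))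
  simp_rw [← MeasureTheory.integral_indicator measurableSet_Ioc]
  exact (hH.indicator hS).stronglyMeasurable.integral_prod_right'.measurable

lemma Measurable.cint {α : Type*} [MeasurableSpace α] {H : α → ℝ → ℝ}
    (hH : Measurable (Function.uncurry H)) {e₁ e₂ : α → ℝ} (he₁ : Measurable e₁)
    (he₂ : Measurable e₂) :
    Measurable fun p => cint (e₁ p) (e₂ p) (H p) := by
  have hinterval : ∀ {f₁ f₂ : α → ℝ}, Measurable f₁ → Measurable f₂ →
      Measurable fun p => ∫ v in f₁ p..f₂ p, H p v := fun h₁ h₂ =>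
    (measurable_setIntegral_Ioc hH h₁ h₂).sub (measurable_setIntegral_Ioc hH h₂ h₁)
  exact Measurable.ite (measurableSet_le he₁ he₂) (hinterval he₁ he₂)
    ((hinterval he₁ measurable_const).add (hinterval measurable_const he₂))

lemma cauchySeq_of_dist_le_geometric_of_ge {α : Type*} [PseudoMetricSpace α] {s : ℕ → α}
    {r C : ℝ} (hr : r < 1) {N : ℕ} (h : ∀ n ≥ N, dist (s n) (s (n + 1)) ≤ C * r ^ n) :
    CauchySeq s :=
  (cauchySeq_shift N).1 <| cauchySeq_of_le_geometric r (C * r ^ N) hr fun n => by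
    have := h (n + N) (Nat.le_add_left N n)
    rwa [add_right_comm, pow_add, mul_comm (r ^ n), ← mul_assoc] at this

lemma abs_sub_le_iSup_of_abs_le {α β : Type*} {s : Set α} {t : Set β} {f f' : α → β → ℝ}
    {B B' : ℝ} (hf : ∀ x ∈ s, ∀ y ∈ t, |f x y| ≤ B) (hf' : ∀ x ∈ s, ∀ y ∈ t, |f' x y| ≤ B')
    {x : α} {y : β} (hx : x ∈ s) (hy : y ∈ t) :
    |f x y - f' x y| ≤ ⨆ q : s × t, |f q.1 q.2 - f' q.1 q.2| := by
  refine le_ciSup (f := fun q : s × t => |f q.1 q.2 - f' q.1 q.2|) ⟨B + B', ?_⟩ (⟨x, hx⟩, ⟨y, hy⟩)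
  rintro _ ⟨⟨⟨u, hu⟩, ⟨v, hv⟩⟩, rfl⟩
  exact (abs_sub _ _).trans (add_le_add (hf u hu v hv) (hf' u hu v hv))

/-- The iteration map `Φ`. -/
noncomputable def substitutionMap (ρ : ℝ) (π : ℝ → ℝ) (b f : ℝ → ℝ → ℝ) (x y : ℝ) : ℝ :=
  ρ * π y * cint x y (fun u => f x u + f y u) + b x y

section SubstitutionMap

variable {ρ : ℝ} {π : ℝ → ℝ} {b f f' : ℝ → ℝ → ℝ}

lemma measurable_substitutionMap (hπ : Measurable π) (hb : Measurable (Function.uncurry b))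
    (hf : Measurable (Function.uncurry f)) :
    Measurable (Function.uncurry (substitutionMap ρ π b f)) := by
  have hH : Measurable (Function.uncurry fun (p : ℝ × ℝ) u => f p.1 u + f p.2 u) :=
    (hf.comp ((measurable_fst.comp measurable_fst).prodMk measurable_snd)).add
      (hf.comp ((measurable_snd.comp measurable_fst).prodMk measurable_snd))
  exact ((measurable_const.mul (hπ.comp measurable_snd)).mul
    (hH.cint measurable_fst measurable_snd)).add hb

lemma abs_substitutionMap_le (hf : Measurable (Function.uncurry f)) {Mπ Mb B : ℝ}
    (hπ : ∀ y ∈ Icc (0 : ℝ) 1, |π y| ≤ Mπ)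
    (hb : ∀ x ∈ Icc (0 : ℝ) 1, ∀ y ∈ Icc (0 : ℝ) 1, |b x y| ≤ Mb)
    (hfB : ∀ x ∈ Icc (0 : ℝ) 1, ∀ y ∈ Icc (0 : ℝ) 1, |f x y| ≤ B)
    {x y : ℝ} (hx : x ∈ Icc (0 : ℝ) 1) (hy : y ∈ Icc (0 : ℝ) 1) :
    |substitutionMap ρ π b f x y| ≤ |ρ| * Mπ * (2 * B) + Mb := by
  have hslice : ∀ z ∈ Icc (0 : ℝ) 1, IntegrableOn (f z) (Icc 0 1) := fun z hz =>
    integrableOn_Icc_of_abs_le (hf.comp measurable_prodMk_left) (hfB z hz)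
  have hcint : |cint x y (fun u => f x u + f y u)| ≤ 2 * B :=
    abs_cint_le_of_abs_le ((hslice x hx).add (hslice y hy))
      (fun u hu => (abs_add_le _ _).trans (by linarith [hfB x hx u hu, hfB y hy u hu])) hx hy
  have hMπ : 0 ≤ Mπ := (abs_nonneg _).trans (hπ y hy)
  calc |substitutionMap ρ π b f x y|
      ≤ |ρ| * |π y| * |cint x y (fun u => f x u + f y u)| + |b x y| := by
        rw [← abs_mul, ← abs_mul]
        exact abs_add_le _ _
    _ ≤ |ρ| * Mπ * (2 * B) + Mb := by
        gcongr
        exacts [hπ y hy, hb x hx y hy]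

lemma substitutionMap_sub (hf : ∀ x ∈ Icc (0 : ℝ) 1, IntegrableOn (f x) (Icc 0 1))
    (hf' : ∀ x ∈ Icc (0 : ℝ) 1, IntegrableOn (f' x) (Icc 0 1))
    {x y : ℝ} (hx : x ∈ Icc (0 : ℝ) 1) (hy : y ∈ Icc (0 : ℝ) 1) :
    substitutionMap ρ π b f x y - substitutionMap ρ π b f' x y =
      ρ * π y * cint x y (fun u => (f x u - f' x u) + (f y u - f' y u)) := by
  have hrearrange : (fun u => (f x u - f' x u) + (f y u - f' y u)) =
      fun u => (f x u + f y u) - (f' x u + f' y u) := by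
    funext u
    ring
  rw [hrearrange, cint_sub (h₁ := fun u => f x u + f y u) (h₂ := fun u => f' x u + f' y u)
    ((hf x hx).add (hf y hy)) ((hf' x hx).add (hf' y hy)) hx hy]
  unfold substitutionMap
  ring

lemma abs_substitutionMap_sub_le (hρ : 0 ≤ ρ) (hπ : ∀ y ∈ Icc (0 : ℝ) 1, 0 ≤ π y)
    (hf : ∀ x ∈ Icc (0 : ℝ) 1, IntegrableOn (f x) (Icc 0 1))
    (hf' : ∀ x ∈ Icc (0 : ℝ) 1, IntegrableOn (f' x) (Icc 0 1)) {φ : ℝ → ℝ → ℝ}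
    (hφ : ∀ x ∈ Icc (0 : ℝ) 1, IntegrableOn (φ x) (Icc 0 1))
    (hle : ∀ x ∈ Icc (0 : ℝ) 1, ∀ u ∈ Icc (0 : ℝ) 1, |f x u - f' x u| ≤ φ x u)
    {x y : ℝ} (hx : x ∈ Icc (0 : ℝ) 1) (hy : y ∈ Icc (0 : ℝ) 1) :
    |substitutionMap ρ π b f x y - substitutionMap ρ π b f' x y| ≤
      ρ * π y * cint x y (fun u => φ x u + φ y u) := by
  rw [substitutionMap_sub hf hf' hx hy, abs_mul, abs_of_nonneg (mul_nonneg hρ (hπ y hy))]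
  refine mul_le_mul_of_nonneg_left ?_ (mul_nonneg hρ (hπ y hy))
  exact abs_cint_le (((hf x hx).sub (hf' x hx)).add ((hf y hy).sub (hf' y hy)))
    ((hφ x hx).add (hφ y hy))
    (fun u hu => (abs_add_le _ _).trans (add_le_add (hle x hx u hu) (hle y hy u hu))) hx hy

end SubstitutionMap

section Iteration

variable {ρ : ℝ} {π : ℝ → ℝ} {b : ℝ → ℝ → ℝ} {g : ℕ → ℝ → ℝ → ℝ}

lemma measurable_and_bounded_iterate (hπ : Measurable π) {Mπ : ℝ}
    (hπbd : ∀ y ∈ Icc (0 : ℝ) 1, |π y| ≤ Mπ) (hbm : Measurable (Function.uncurry b))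
    (hbbd : ∃ M : ℝ, ∀ x ∈ Icc (0 : ℝ) 1, ∀ y ∈ Icc (0 : ℝ) 1, |b x y| ≤ M)
    (hg0m : Measurable (Function.uncurry (g 0)))
    (hg0bd : ∃ M : ℝ, ∀ x ∈ Icc (0 : ℝ) 1, ∀ y ∈ Icc (0 : ℝ) 1, |g 0 x y| ≤ M)
    (hg : ∀ n, g (n + 1) = substitutionMap ρ π b (g n)) (n : ℕ) :
    Measurable (Function.uncurry (g n)) ∧
      ∃ M : ℝ, ∀ x ∈ Icc (0 : ℝ) 1, ∀ y ∈ Icc (0 : ℝ) 1, |g n x y| ≤ M := by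
  induction n with
  | zero => exact ⟨hg0m, hg0bd⟩
  | succ n ih =>
    obtain ⟨hm, B, hB⟩ := ih
    obtain ⟨Mb, hMb⟩ := hbbd
    rw [hg n]
    exact ⟨measurable_substitutionMap hπ hbm hm, _,
      fun x hx y hy => abs_substitutionMap_le hm hπbd hMb hB hx hy⟩

lemma abs_iterate_sub_le_of_abs_sub_le (hρ : 0 ≤ ρ) (hπnn : ∀ y ∈ Icc (0 : ℝ) 1, 0 ≤ π y)
    (hg : ∀ n, g (n + 1) = substitutionMap ρ π b (g n))
    (hgi : ∀ n, ∀ x ∈ Icc (0 : ℝ) 1, IntegrableOn (g n x) (Icc 0 1)) {n : ℕ} {φ : ℝ → ℝ → ℝ}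
    (hφ : ∀ x ∈ Icc (0 : ℝ) 1, IntegrableOn (φ x) (Icc 0 1))
    (hle : ∀ x ∈ Icc (0 : ℝ) 1, ∀ u ∈ Icc (0 : ℝ) 1, |g (n + 1) x u - g n x u| ≤ φ x u)
    {x y : ℝ} (hx : x ∈ Icc (0 : ℝ) 1) (hy : y ∈ Icc (0 : ℝ) 1) :
    |g (n + 2) x y - g (n + 1) x y| ≤ ρ * π y * cint x y (fun u => φ x u + φ y u) := by
  have := abs_substitutionMap_sub_le (b := b) hρ hπnn (hgi (n + 1)) (hgi n) hφ hle hx hy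
  rwa [← hg (n + 1), ← hg n] at this

theorem abs_iterate_sub_le (hρ : 0 ≤ ρ) (hπm : Measurable π)
    (hπnn : ∀ y ∈ Icc (0 : ℝ) 1, 0 ≤ π y) {Mπ : ℝ} (hπbd : ∀ y ∈ Icc (0 : ℝ) 1, |π y| ≤ Mπ)
    (hπ1 : ∫ u in (0 : ℝ)..1, π u = 1) (hg : ∀ n, g (n + 1) = substitutionMap ρ π b (g n))
    (hgi : ∀ n, ∀ x ∈ Icc (0 : ℝ) 1, IntegrableOn (g n x) (Icc 0 1)) {M : ℝ}
    (hM : ∀ x ∈ Icc (0 : ℝ) 1, ∀ y ∈ Icc (0 : ℝ) 1, |g 1 x y - g 0 x y| ≤ M) :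
    ∀ n, 2 ≤ n → ∀ x ∈ Icc (0 : ℝ) 1, ∀ y ∈ Icc (0 : ℝ) 1,
      |g (n + 1) x y - g n x y| ≤ 4 * ρ ^ n * π y * M * cint x y π := by
  have hπi : IntegrableOn π (Icc 0 1) := integrableOn_Icc_of_abs_le hπm hπbd
  have hconst : ∀ c : ℝ, IntegrableOn (fun _ : ℝ => c) (Icc (0 : ℝ) 1) := fun c =>
    integrableOn_const measure_Icc_lt_top.ne
  have hπcint : ∀ x ∈ Icc (0 : ℝ) 1, IntegrableOn (fun u => π u * cint x u π) (Icc 0 1) :=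
    fun x hx => hπi.mul_bdd
      ((hπm.comp measurable_snd).cint (H := fun _ : ℝ => π) measurable_const measurable_id
        ).aestronglyMeasurable
      ((ae_restrict_iff' measurableSet_Icc).2
        (.of_forall fun u hu => abs_cint_le_of_abs_le hπi hπbd hx hu))
  have hM0 : 0 ≤ M := (abs_nonneg _).trans (hM 0 unitInterval.zero_mem 0 unitInterval.zero_mem)
  have hD1 : ∀ x ∈ Icc (0 : ℝ) 1, ∀ u ∈ Icc (0 : ℝ) 1,
      |g 2 x u - g 1 x u| ≤ 2 * ρ * M * π u := fun x hx u hu => by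
    calc _ ≤ ρ * π u * cint x u (fun _ => M + M) :=
          abs_iterate_sub_le_of_abs_sub_le (n := 0) (φ := fun _ _ => M) hρ hπnn hg hgi
            (fun _ _ => hconst M) hM hx hu
      _ ≤ ρ * π u * ∫ _ in (0 : ℝ)..1, M + M :=
          mul_le_mul_of_nonneg_left (cint_le_integral (hconst _) (fun _ _ => by linarith) hx hu)
            (mul_nonneg hρ (hπnn u hu))
      _ = 2 * ρ * M * π u := by
          simp only [intervalIntegral.integral_const, sub_zero, one_smul]
          ring
  intro n hn
  induction n, hn using Nat.le_induction with
  | base =>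
    intro x hx y hy
    calc _ ≤ ρ * π y * cint x y (fun u => 2 * ρ * M * π u + 2 * ρ * M * π u) :=
          abs_iterate_sub_le_of_abs_sub_le (n := 1) (φ := fun _ u => 2 * ρ * M * π u) hρ hπnn
            hg hgi (fun _ _ => hπi.const_mul _) hD1 hx hy
      _ = 4 * ρ ^ 2 * π y * M * cint x y π := by
          simp only [← two_mul, ← mul_assoc, cint_const_mul]
          ring
  | succ n hn ih =>
    intro x hx y hy
    calc _ ≤ ρ * π y * cint x y (fun u => 4 * ρ ^ n * M * (π u * cint x u π) +
            4 * ρ ^ n * M * (π u * cint y u π)) :=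
          abs_iterate_sub_le_of_abs_sub_le (φ := fun x u => 4 * ρ ^ n * M * (π u * cint x u π))
            hρ hπnn hg hgi (fun x hx => (hπcint x hx).const_mul _)
            (fun x hx u hu => (ih x hx u hu).trans_eq (by ring)) hx hy
      _ = 4 * ρ ^ (n + 1) * π y * M * cint x y π := by
          simp only [← mul_add, cint_const_mul, cint_mul_cint_add_cint hπi hπ1 hx hy]
          ring

end Iteration

/-- Geometric contraction of the successive-substitution iteration
`g_{n+1}(x,y) = ρ·π(y)·∫*_{u=x}^{y} [g_n(x,u) + g_n(y,u)] du + b(x,y)`: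
for `n ≥ 2`, `|g_{n+1} − g_n| ≤ 4ρⁿ·π(y)·‖g₁ − g₀‖_∞·∫*_{u=x}^{y} π(u) du`,
and consequently the sequence converges pointwise on `[0,1]²`. -/
theorem successive_substitution_contracts_and_converges
    (ρ : ℝ) (hρ : ρ ∈ Set.Ioo (0 : ℝ) 1)
    (π : ℝ → ℝ) (hπmeas : Measurable π)
    (hπnn : ∀ x ∈ Set.Icc (0 : ℝ) 1, 0 ≤ π x)
    (hπbd : ∃ M : ℝ, ∀ x ∈ Set.Icc (0 : ℝ) 1, π x ≤ M)
    (hπint : (∫ u in (0 : ℝ)..1, π u) = 1)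
    (b : ℝ → ℝ → ℝ)
    (hbmeas : Measurable (Function.uncurry b))
    (hbbd : ∃ M : ℝ, ∀ x ∈ Set.Icc (0 : ℝ) 1, ∀ y ∈ Set.Icc (0 : ℝ) 1, |b x y| ≤ M)
    (g : ℕ → ℝ → ℝ → ℝ)
    (hg0meas : Measurable (Function.uncurry (g 0)))
    (hg0bd : ∃ M : ℝ, ∀ x ∈ Set.Icc (0 : ℝ) 1, ∀ y ∈ Set.Icc (0 : ℝ) 1, |g 0 x y| ≤ M)
    (hgrec : ∀ (n : ℕ) (x y : ℝ),
      g (n + 1) x y = ρ * π y * cint x y (fun u => g n x u + g n y u) + b x y)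
    (M : ℝ)
    (hM : M = ⨆ q : Set.Icc (0 : ℝ) 1 × Set.Icc (0 : ℝ) 1,
      |g 1 (q.1 : ℝ) (q.2 : ℝ) - g 0 (q.1 : ℝ) (q.2 : ℝ)|) :
    (∀ n : ℕ, 2 ≤ n → ∀ x ∈ Set.Icc (0 : ℝ) 1, ∀ y ∈ Set.Icc (0 : ℝ) 1,
      |g (n + 1) x y - g n x y| ≤ 4 * ρ ^ n * π y * M * cint x y π) ∧
    (∀ x ∈ Set.Icc (0 : ℝ) 1, ∀ y ∈ Set.Icc (0 : ℝ) 1,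
      ∃ L : ℝ, Filter.Tendsto (fun n => g n x y) Filter.atTop (nhds L)) := by
  obtain ⟨hρ0, hρ1⟩ := hρ
  obtain ⟨Mπ, hMπ⟩ := hπbd
  have hπabs : ∀ y ∈ Icc (0 : ℝ) 1, |π y| ≤ Mπ := fun y hy =>
    (abs_of_nonneg (hπnn y hy)).trans_le (hMπ y hy)
  have hg : ∀ n, g (n + 1) = substitutionMap ρ π b (g n) := fun n => funext₂ (hgrec n)
  have hreg := measurable_and_bounded_iterate hπmeas hπabs hbmeas hbbd hg0meas hg0bd hg
  have hgi : ∀ n, ∀ x ∈ Icc (0 : ℝ) 1, IntegrableOn (g n x) (Icc 0 1) := fun n x hx =>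
    integrableOn_Icc_of_abs_le ((hreg n).1.comp measurable_prodMk_left)
      ((hreg n).2.choose_spec x hx)
  have hM₁₀ : ∀ x ∈ Icc (0 : ℝ) 1, ∀ y ∈ Icc (0 : ℝ) 1, |g 1 x y - g 0 x y| ≤ M := fun x hx y hy =>
    hM ▸ abs_sub_le_iSup_of_abs_le (hreg 1).2.choose_spec (hreg 0).2.choose_spec hx hy
  have hcontr := abs_iterate_sub_le hρ0.le hπmeas hπnn hπabs hπint hg hgi hM₁₀
  refine ⟨hcontr, fun x hx y hy => cauchySeq_tendsto_of_complete
    (cauchySeq_of_dist_le_geometric_of_ge hρ1 (C := 4 * π y * M * cint x y π) (N := 2)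
      fun n hn => ?_)⟩
  rw [Real.dist_eq, abs_sub_comm]
  exact (hcontr n hn x hx y hy).trans_eq (by ring)
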